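/- arXiv:2210.09936 — 2 statements merged into one kernel-verified Lean document; each statement's English description precedes it below -/
import Mathlib

section
/- Suppose D is a tournament obtained from Pal_7 by replacing each vertex 1,...,6 with a directed triangle (keeping vertex 0 as a single vertex), and suppose D admits a partition of its 19 vertices into 4 transitive sets. Then some color class, viewed as a multiset of Pal_7 vertices, meets at least 4 distinct vertices of Pal_7, contradicting that Pal_7 is TT_4-free; hence no such partition exists. -/
/-!
Each directed triangle `i₁ → i₂ → i₃ → i₁` is not transitive, so it receives at least two of the
four colours. Counting pairs (colour, vertex of `Pal₇` met by that colour) therefore gives at least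
`1 + 6 * 2 = 13 > 4 * 3` incidences, so some colour class projects onto at least four vertices of
`Pal₇`. Between copies of distinct vertices `D` follows `Pal₇`, so the projection of a transitive
set of `D` is transitive in `Pal₇`.
-/

def IsTournament {V : Type*} (r : V → V → Prop) : Prop :=
  (∀ v, ¬ r v v) ∧ ∀ u v : V, u ≠ v → (r u v ↔ ¬ r v u)

def TransOn {V : Type*} (r : V → V → Prop) (S : Set V) : Prop :=
  ∀ a ∈ S, ∀ b ∈ S, ∀ c ∈ S, r a b → r b c → r a c

def Colorable {V : Type*} (r : V → V → Prop) (k : ℕ) : Prop :=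
  ∃ f : V → Fin k, ∀ c : Fin k, TransOn r {v | f v = c}

def pal7 (i j : ZMod 7) : Prop := i - j = 1 ∨ i - j = 2 ∨ i - j = 4

/-- Vertices of the blow-up: `none` is vertex 0 of `Pal₇`, and `some (i, m)`
is the `m`-th copy of vertex `i + 1` of `Pal₇`. -/
def DV : Type := Option (Fin 6 × ZMod 3)

instance : Fintype DV := instFintypeOption

/-- The vertex of `Pal₇` that a vertex of the blow-up comes from. -/
def proj : DV → ZMod 7
  | none => 0
  | some (i, _) => (i : ℕ) + 1

/-- Arcs of the blow-up: between copies of distinct `Pal₇`-vertices follow `Pal₇`,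
and each triple of copies of one vertex forms a directed triangle. -/
def Darc (u v : DV) : Prop :=
  match u, v with
  | none, none => False
  | none, some (k, _) => pal7 0 ((k : ℕ) + 1)
  | some (i, _), none => pal7 ((i : ℕ) + 1) 0
  | some (i, m), some (k, l) =>
      if i = k then l = m + 1 else pal7 ((i : ℕ) + 1) ((k : ℕ) + 1)

open Finset

lemma TransOn.mono {V : Type*} {r : V → V → Prop} {S T : Set V} (hT : TransOn r T) (hST : S ⊆ T) :
    TransOn r S :=
  fun a ha b hb c hc => hT a (hST ha) b (hST hb) c (hST hc)

lemma TransOn.image {V W : Type*} {r : V → V → Prop} {s : W → W → Prop} {p : V → W} {C : Set V}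
    (hC : TransOn r C) (hs : ∀ x y, s x y → ¬ s y x) (hsr : ∀ u v, s (p u) (p v) → r u v)
    (hrs : ∀ u v, r u v → p u ≠ p v → s (p u) (p v)) :
    TransOn s (p '' C) := by
  rintro _ ⟨u, hu, rfl⟩ _ ⟨v, hv, rfl⟩ _ ⟨w, hw, rfl⟩ huv hvw
  by_cases huw : p u = p w
  · rw [huw] at huv
    exact absurd hvw (hs _ _ huv)
  · exact hrs u w (hC u hu v hv w hw (hsr u v huv) (hsr v w hvw)) huw

lemma exists_lt_card_met_of_mul_lt_sum {V ι W : Type*} [Fintype V] [Fintype ι] [Fintype W]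
    [DecidableEq ι] [DecidableEq W] (f : V → ι) (p : V → W) (n : ℕ)
    (h : Fintype.card ι * n < ∑ x, #{c | ∃ v, f v = c ∧ p v = x}) :
    ∃ c, n < #{x | ∃ v, f v = c ∧ p v = x} := by
  have hcount := sum_card_bipartiteAbove_eq_sum_card_bipartiteBelow
    (s := (univ : Finset ι)) (t := (univ : Finset W)) (fun c x => ∃ v, f v = c ∧ p v = x)
  simp only [bipartiteAbove, bipartiteBelow] at hcount
  obtain ⟨c, -, hc⟩ := exists_lt_of_sum_lt (s := (univ : Finset ι)) (f := fun _ => n)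
    (by rw [hcount, sum_const, card_univ, smul_eq_mul]; exact h)
  exact ⟨c, hc⟩

lemma pal7_asymm : ∀ x y : ZMod 7, pal7 x y → ¬ pal7 y x := by
  unfold pal7; decide

lemma pal7_irrefl (x : ZMod 7) : ¬ pal7 x x :=
  fun h => pal7_asymm x x h h

lemma darc_of_pal7_proj : ∀ u v : DV, pal7 (proj u) (proj v) → Darc u v := by
  rintro (_ | ⟨i, m⟩) (_ | ⟨k, l⟩) h
  · exact absurd h (pal7_irrefl 0)
  · exact h
  · exact h
  · by_cases hik : i = k
    · subst hik
      exact absurd h (pal7_irrefl _)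
    · simpa only [Darc, proj, if_neg hik] using h

lemma pal7_proj_of_darc : ∀ u v : DV, Darc u v → proj u ≠ proj v → pal7 (proj u) (proj v) := by
  rintro (_ | ⟨i, m⟩) (_ | ⟨k, l⟩) h hne
  · exact h.elim
  · exact h
  · exact h
  · by_cases hik : i = k
    · subst hik
      exact absurd rfl hne
    · simpa only [Darc, proj, if_neg hik] using h

lemma darc_copies_iff (i : Fin 6) (m l : ZMod 3) :
    Darc (some (i, m)) (some (i, l)) ↔ l = m + 1 := by
  simp only [Darc, if_true]

lemma exists_color_ne_in_triangle {ι : Type*} {f : DV → ι}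
    (hf : ∀ c, TransOn Darc {v | f v = c}) (i : Fin 6) :
    ∃ m : ZMod 3, f (some (i, m)) ≠ f (some (i, 0)) := by
  by_contra! hmono
  have h02 := hf _ _ rfl _ (hmono 1) _ (hmono 2)
    ((darc_copies_iff i 0 1).mpr (by decide)) ((darc_copies_iff i 1 2).mpr (by decide))
  exact absurd ((darc_copies_iff i 0 2).mp h02) (by decide)

lemma two_le_card_colors_at {ι : Type*} [Fintype ι] [DecidableEq ι] {f : DV → ι}
    (hf : ∀ c, TransOn Darc {v | f v = c}) {x : ZMod 7} (hx : x ≠ 0) :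
    2 ≤ #{c | ∃ v, f v = c ∧ proj v = x} := by
  obtain ⟨i, rfl⟩ : ∃ i : Fin 6, proj (some (i, 0)) = x := by
    revert x; unfold proj; decide
  have hmem : ∀ m, f (some (i, m)) ∈
      ({c | ∃ v, f v = c ∧ proj v = proj (some (i, 0))} : Finset ι) :=
    fun m => mem_filter.mpr ⟨mem_univ _, _, rfl, rfl⟩
  obtain ⟨m, hm⟩ := exists_color_ne_in_triangle hf i
  exact one_lt_card.mpr ⟨_, hmem m, _, hmem 0, hm⟩

theorem stmt16 (f : DV → Fin 4) (hf : ∀ c : Fin 4, TransOn Darc {v | f v = c}) :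
    ∃ c : Fin 4, ∃ S : Finset (ZMod 7), S.card = 4 ∧
      (∀ x ∈ S, ∃ v : DV, f v = c ∧ proj v = x) ∧ TransOn pal7 ↑S := by
  have hcolors : ∀ x, (if x = 0 then 1 else 2) ≤ #{c | ∃ v, f v = c ∧ proj v = x} := by
    intro x
    split_ifs with hx
    · exact card_pos.mpr ⟨f none, mem_filter.mpr ⟨mem_univ _, none, rfl, hx.symm⟩⟩
    · exact two_le_card_colors_at hf hx
  obtain ⟨c, hc⟩ := exists_lt_card_met_of_mul_lt_sum f proj 3 <|
    calc Fintype.card (Fin 4) * 3 < ∑ x : ZMod 7, if x = 0 then 1 else 2 := by decide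
      _ ≤ _ := sum_le_sum fun x _ => hcolors x
  obtain ⟨S, hSc, hS⟩ := exists_subset_card_eq hc
  have hSmet : ∀ x ∈ S, ∃ v, f v = c ∧ proj v = x := fun x hx => (mem_filter.mp (hSc hx)).2
  refine ⟨c, S, hS, hSmet, ?_⟩
  exact (TransOn.image (hf c) pal7_asymm darc_of_pal7_proj pal7_proj_of_darc).mono
    fun x hx => hSmet x hx
end

section
/- If T is a tournament on 17 vertices that is not 4-colorable, and every tournament on 16 vertices contains a transitive subtournament on 5 vertices, and every 4-chromatic tournament on 12 vertices is a gluing of W_1 and TT_5, then the vertex set of T can be partitioned into sets A_1, A_2, B where A_1 and A_2 each induce a transitive tournament on 5 vertices and B induces a tournament isomorphic to W_1. -/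
def w1 (i j : Fin 7) : Prop :=
  ((i : ℕ), (j : ℕ)) ∈ [(0,1), (0,2), (0,3), (4,0), (5,0), (6,0), (1,2), (2,3), (3,1),
    (4,5), (5,6), (6,4), (1,5), (1,6), (1,4), (2,6), (2,4), (5,2), (3,4), (3,5), (6,3)]

/-- `B` induces a subtournament of `r` isomorphic to `W₁`. -/
def InducesW1 {V : Type*} [DecidableEq V] (r : V → V → Prop) (B : Finset V) : Prop :=
  ∃ g : Fin 7 → V, Function.Injective g ∧ Finset.image g Finset.univ = B ∧
    ∀ i j, r (g i) (g j) ↔ w1 i j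

/-!
Every tournament on `2 ^ k` vertices contains a transitive subtournament on `k + 1` vertices
(a vertex together with a large out- or in-neighbourhood). Greedily peeling off transitive sets
of sizes `4, 4, 3, 1` shows that every tournament on `12` vertices is `4`-colourable. In the
`17`-vertex tournament `T`, take a transitive set `A₁` of size `5` (as `2 ^ 4 ≤ 17`); the
remaining `12` vertices are not `3`-colourable (otherwise `A₁` would be a fourth colour class),
so they form a `4`-chromatic tournament, which by hypothesis splits into a copy of `W₁` and a
`TT₅`.
-/

open Finset Function

variable {V W : Type*} {r : V → V → Prop}

namespace IsTournament

theorem asymm (hT : IsTournament r) {a b : V} (hab : r a b) : ¬ r b a := by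
  rcases eq_or_ne a b with rfl | hne
  · exact hT.1 a
  · exact (hT.2 a b hne).mp hab

theorem rel_or_rel (hT : IsTournament r) {a b : V} (hne : a ≠ b) : r a b ∨ r b a := by
  have := hT.2 a b hne
  tauto

protected theorem flip (hT : IsTournament r) : IsTournament (flip r) :=
  ⟨hT.1, fun u v huv => hT.2 v u huv.symm⟩

theorem preimage (hT : IsTournament r) {f : W → V} (hf : Injective f) :
    IsTournament (f ⁻¹'o r) :=
  ⟨fun v => hT.1 (f v), fun u v huv => hT.2 (f u) (f v) (hf.ne huv)⟩

end IsTournament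

namespace TransOn

theorem mono_s19 {S S' : Set V} (h : S ⊆ S') (ht : TransOn r S') : TransOn r S :=
  fun a ha b hb c hc => ht a (h ha) b (h hb) c (h hc)

protected theorem flip {S : Set V} (h : TransOn r S) : TransOn (flip r) S :=
  fun a ha b hb c hc hab hbc => h c hc b hb a ha hbc hab

theorem image_s19 {f : W → V} {S : Set W} (h : TransOn (f ⁻¹'o r) S) : TransOn r (f '' S) := by
  rintro _ ⟨a, ha, rfl⟩ _ ⟨b, hb, rfl⟩ _ ⟨c, hc, rfl⟩
  exact h a ha b hb c hc

theorem insert_source (hT : IsTournament r) {S : Set V} {v : V} (hS : TransOn r S)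
    (hv : ∀ x ∈ S, r v x) : TransOn r (insert v S) := by
  rintro a (rfl | ha) b (rfl | hb) c (rfl | hc) hab hbc
  all_goals first
    | exact hS a ha b hb c hc hab hbc
    | exact hv c hc
    | exact absurd hab (hT.1 _)
    | exact absurd hab (hT.asymm (hv a ha))
    | exact absurd hbc (hT.asymm (hv b hb))

theorem insert_sink (hT : IsTournament r) {S : Set V} {v : V} (hS : TransOn r S)
    (hv : ∀ x ∈ S, r x v) : TransOn r (insert v S) :=
  (hS.flip.insert_source hT.flip hv).flip

end TransOn

theorem Set.Subsingleton.transOn {S : Set V} (hS : S.Subsingleton) : TransOn r S :=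
  fun _ _ _ hb _ hc hab _ => hS hb hc ▸ hab

theorem IsTournament.exists_transOn_card_eq (hT : IsTournament r) (k : ℕ)
    {S : Finset V} (hS : 2 ^ k ≤ #S) : ∃ T ⊆ S, #T = k + 1 ∧ TransOn r T := by
  classical
  induction k generalizing S with
  | zero =>
    obtain ⟨v, hv⟩ : S.Nonempty := card_pos.mp (by simpa using hS)
    exact ⟨{v}, singleton_subset_iff.2 hv, card_singleton v,
      by simpa using Set.subsingleton_singleton.transOn⟩
  | succ k ih =>
    obtain ⟨v, hv⟩ : S.Nonempty := card_pos.mp (lt_of_lt_of_le (by positivity) hS)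
    set N := (S.erase v).filter (r v ·)
    set M := (S.erase v).filter (r · v)
    have hcover : #S - 1 ≤ #N + #M := by
      rw [← card_erase_of_mem hv]
      refine (card_le_card fun x hx => ?_).trans (card_union_le N M)
      simpa [N, M, hx] using hT.rel_or_rel (ne_of_mem_erase hx).symm
    have hinsert : ∀ T ⊆ S.erase v, #T = k + 1 →
        insert v T ⊆ S ∧ #(insert v T) = k + 1 + 1 :=
      fun T hTS hT => ⟨insert_subset hv (hTS.trans (erase_subset v S)),
        by rw [card_insert_of_notMem fun h => by simpa using hTS h, hT]⟩
    rcases le_or_gt (2 ^ k) #N with hN | hM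
    · obtain ⟨T, hTN, hTc, hTt⟩ := ih hN
      obtain ⟨hTS, hTc'⟩ := hinsert T (hTN.trans (filter_subset _ _)) hTc
      refine ⟨insert v T, hTS, hTc', ?_⟩
      rw [coe_insert]
      exact hTt.insert_source hT fun x hx => (mem_filter.1 (hTN hx)).2
    · obtain ⟨T, hTM, hTc, hTt⟩ := ih (S := M) (by rw [pow_succ] at hS; omega)
      obtain ⟨hTS, hTc'⟩ := hinsert T (hTM.trans (filter_subset _ _)) hTc
      refine ⟨insert v T, hTS, hTc', ?_⟩
      rw [coe_insert]
      exact hTt.insert_sink hT fun x hx => (mem_filter.1 (hTM hx)).2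

theorem colorable_one_of_subsingleton [Subsingleton V] : Colorable r 1 :=
  ⟨fun _ => 0, fun _ => Set.subsingleton_of_subsingleton.transOn⟩

theorem Colorable.succ_of_transOn [Fintype V] [DecidableEq V] {A : Finset V} {k : ℕ}
    (hA : TransOn r A) (h : Colorable (Subrel r (· ∈ Aᶜ)) k) : Colorable r (k + 1) := by
  obtain ⟨f, hf⟩ := h
  refine ⟨fun v => if hv : v ∈ A then Fin.last k else (f ⟨v, mem_compl.2 hv⟩).castSucc,
    fun c => ?_⟩
  induction c using Fin.lastCases with
  | last =>
    refine hA.mono_s19 fun v hv => ?_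
    by_contra hvA
    simp [hvA, Fin.castSucc_ne_last] at hv
  | cast i =>
    refine (hf i).image_s19.mono_s19 fun v hv => ?_
    have hvA : v ∉ A := fun hvA => by simp [hvA, (Fin.castSucc_ne_last i).symm] at hv
    exact ⟨⟨v, mem_compl.2 hvA⟩, by simpa [hvA] using hv, rfl⟩

namespace IsTournament

variable [Fintype V] [DecidableEq V]

theorem colorable_succ (hT : IsTournament r) {j k : ℕ} (hj : 2 ^ j ≤ Fintype.card V)
    (h : ∀ A : Finset V, #A = j + 1 → Colorable (Subrel r (· ∈ Aᶜ)) k) :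
    Colorable r (k + 1) := by
  obtain ⟨A, -, hA, hAt⟩ := hT.exists_transOn_card_eq j (S := univ) (by simpa using hj)
  exact (h A hA).succ_of_transOn hAt

theorem colorable_two_of_card_eq_four (hT : IsTournament r) (hV : Fintype.card V = 4) :
    Colorable r 2 :=
  hT.colorable_succ (j := 2) (by omega) fun A hA =>
    have : Subsingleton ↥Aᶜ :=
      Fintype.card_le_one_iff_subsingleton.mp (by simp [hA, hV])
    colorable_one_of_subsingleton

theorem colorable_three_of_card_eq_eight (hT : IsTournament r) (hV : Fintype.card V = 8) :
    Colorable r 3 :=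
  hT.colorable_succ (j := 3) (by omega) fun A hA =>
    (hT.preimage Subtype.val_injective).colorable_two_of_card_eq_four
      (by simp [hA, hV])

theorem colorable_four_of_card_eq_twelve (hT : IsTournament r) (hV : Fintype.card V = 12) :
    Colorable r 4 :=
  hT.colorable_succ (j := 3) (by omega) fun A hA =>
    (hT.preimage Subtype.val_injective).colorable_three_of_card_eq_eight
      (by simp [hA, hV])

end IsTournament

theorem InducesW1.map [DecidableEq V] [DecidableEq W] {B : Finset W} (f : W ↪ V)
    (h : InducesW1 (f ⁻¹'o r) B) : InducesW1 r (B.map f) := by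
  obtain ⟨g, hg, rfl, hgw⟩ := h
  exact ⟨f ∘ g, f.injective.comp hg, by rw [map_eq_image, image_image], hgw⟩

section Complement

variable [Fintype V] [DecidableEq V] {A : Finset V}

theorem Finset.disjoint_map_subtype_compl (X : Finset ↥Aᶜ) :
    Disjoint A (X.map (Embedding.subtype _)) := by
  refine disjoint_left.2 fun x hx hx' => ?_
  obtain ⟨y, -, rfl⟩ := mem_map.1 hx'
  exact mem_compl.1 y.2 hx

theorem Finset.union_map_subtype_compl {X Y : Finset ↥Aᶜ} (h : X ∪ Y = univ) :
    A ∪ Y.map (Embedding.subtype _) ∪ X.map (Embedding.subtype _) = univ := by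
  rw [union_assoc, ← map_union, union_comm Y, h, univ_map_subtype, filter_mem_eq_inter,
    univ_inter, union_compl]

end Complement

theorem stmt19_general
    (hglue : ∀ (W : Type) [Fintype W] [DecidableEq W] (s : W → W → Prop),
      IsTournament s → Fintype.card W = 12 → ¬ Colorable s 3 → Colorable s 4 →
      ∃ B A : Finset W, Disjoint B A ∧ B ∪ A = Finset.univ ∧
        InducesW1 s B ∧ A.card = 5 ∧ TransOn s ↑A)
    (V : Type) [Fintype V] [DecidableEq V] (r : V → V → Prop)
    (hT : IsTournament r) (hcard : Fintype.card V = 17) (hnc : ¬ Colorable r 4) :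
    ∃ A₁ A₂ B : Finset V, Disjoint A₁ A₂ ∧ Disjoint A₁ B ∧ Disjoint A₂ B ∧
      A₁ ∪ A₂ ∪ B = Finset.univ ∧
      A₁.card = 5 ∧ TransOn r ↑A₁ ∧ A₂.card = 5 ∧ TransOn r ↑A₂ ∧
      InducesW1 r B := by
  obtain ⟨A₁, -, hA₁, hA₁t⟩ :=
    hT.exists_transOn_card_eq 4 (S := univ) (by simp [hcard])
  have hT' := hT.preimage (Subtype.val_injective (p := (· ∈ A₁ᶜ)))
  have hcard' : Fintype.card ↥A₁ᶜ = 12 := by simp [hA₁, hcard]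
  have hnc' : ¬ Colorable (Subrel r (· ∈ A₁ᶜ)) 3 := fun h3 =>
    hnc (h3.succ_of_transOn hA₁t)
  obtain ⟨B, A₂, hBA, hunion, hB, hA₂, hA₂t⟩ :=
    hglue _ _ hT' hcard' hnc' (hT'.colorable_four_of_card_eq_twelve hcard')
  refine ⟨A₁, A₂.map (Embedding.subtype _), B.map (Embedding.subtype _),
    disjoint_map_subtype_compl A₂, disjoint_map_subtype_compl B, (disjoint_map _).2 hBA.symm,
    union_map_subtype_compl hunion, hA₁, hA₁t, by rwa [card_map], ?_,
    hB.map (Embedding.subtype _)⟩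
  rw [coe_map]
  exact hA₂t.image_s19

theorem stmt19
    (hTT5 : ∀ (W : Type) [Fintype W] [DecidableEq W] (s : W → W → Prop),
      IsTournament s → Fintype.card W = 16 →
      ∃ S : Finset W, S.card = 5 ∧ TransOn s ↑S)
    (hglue : ∀ (W : Type) [Fintype W] [DecidableEq W] (s : W → W → Prop),
      IsTournament s → Fintype.card W = 12 → ¬ Colorable s 3 → Colorable s 4 →
      ∃ B A : Finset W, Disjoint B A ∧ B ∪ A = Finset.univ ∧
        InducesW1 s B ∧ A.card = 5 ∧ TransOn s ↑A)
    (V : Type) [Fintype V] [DecidableEq V] (r : V → V → Prop)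
    (hT : IsTournament r) (hcard : Fintype.card V = 17) (hnc : ¬ Colorable r 4) :
    ∃ A₁ A₂ B : Finset V, Disjoint A₁ A₂ ∧ Disjoint A₁ B ∧ Disjoint A₂ B ∧
      A₁ ∪ A₂ ∪ B = Finset.univ ∧
      A₁.card = 5 ∧ TransOn r ↑A₁ ∧ A₂.card = 5 ∧ TransOn r ↑A₂ ∧
      InducesW1 r B :=
  stmt19_general hglue V r hT hcard hnc
end
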